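/- arXiv:2307.00336 — 3 statements merged into one kernel-verified Lean document; each statement's English description precedes it below -/
import Mathlib

section
/- For any nonempty subset S ⊆ {1,…,N}, any vertex v ∈ S, and any SNR > 0, removing v improves S (i.e., ξ₁(S) + (k/(N·SNR))·ξ₂(S) > ξ₁(S∖{v}) + (k/(N·SNR))·ξ₂(S∖{v})) if and only if SNR < τ(S,v) = (k/N)·Δ₂(S,v). -/
open Matrix

noncomputable section

open scoped Classical in
/-- The Moore–Penrose pseudoinverse of a real matrix, characterised by the four
Penrose conditions:  `A A† A = A`, `A† A A† = A†`, `(A A†)ᵀ = A A†`, `(A† A)ᵀ = A† A`. -/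
noncomputable def pinv {m n : Type*} [Fintype m] [Fintype n] [DecidableEq m] [DecidableEq n]
    (A : Matrix m n ℝ) : Matrix n m ℝ :=
  if h : ∃ B : Matrix n m ℝ,
      A * B * A = A ∧ B * A * B = B ∧ (A * B)ᵀ = A * B ∧ (B * A)ᵀ = B * A
  then h.choose else 0


set_option linter.unusedSectionVars false
set_option maxHeartbeats 1000000

namespace Stmt0Aux

variable {m n p : Type*} [Fintype m] [Fintype n] [Fintype p]
  [DecidableEq m] [DecidableEq n] [DecidableEq p]

def IsMP (A : Matrix m n ℝ) (B : Matrix n m ℝ) : Prop :=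
  A * B * A = A ∧ B * A * B = B ∧ (A * B)ᵀ = A * B ∧ (B * A)ᵀ = B * A

theorem isMP_unique {A : Matrix m n ℝ} {B C : Matrix n m ℝ}
    (hB : IsMP A B) (hC : IsMP A C) : B = C := by
  obtain ⟨hB1, hB2, hB3, hB4⟩ := hB
  obtain ⟨hC1, hC2, hC3, hC4⟩ := hC
  have tB : Bᵀ * Aᵀ = A * B := by rw [← Matrix.transpose_mul]; exact hB3
  have tC : Cᵀ * Aᵀ = A * C := by rw [← Matrix.transpose_mul]; exact hC3
  have tC' : Aᵀ * Cᵀ = C * A := by rw [← Matrix.transpose_mul]; exact hC4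
  have hAt2 : B * A * Aᵀ = Aᵀ := by
    calc B * A * Aᵀ = (B * A)ᵀ * Aᵀ := by rw [hB4]
      _ = (A * (B * A))ᵀ := by rw [← Matrix.transpose_mul]
      _ = (A * B * A)ᵀ := by rw [Matrix.mul_assoc]
      _ = Aᵀ := by rw [hB1]
  have e1 : B = B * A * C := by
    calc B = B * A * B := hB2.symm
      _ = B * (A * B) := by rw [Matrix.mul_assoc]
      _ = B * (Bᵀ * Aᵀ) := by rw [tB]
      _ = B * Bᵀ * Aᵀ := by rw [Matrix.mul_assoc]
      _ = B * Bᵀ * (A * C * A)ᵀ := by rw [hC1]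
      _ = B * Bᵀ * (Aᵀ * (Cᵀ * Aᵀ)) := by rw [Matrix.transpose_mul, Matrix.transpose_mul]
      _ = B * Bᵀ * Aᵀ * (Cᵀ * Aᵀ) := by rw [Matrix.mul_assoc (B * Bᵀ)]
      _ = B * (Bᵀ * Aᵀ) * (Cᵀ * Aᵀ) := by rw [Matrix.mul_assoc B]
      _ = B * (A * B) * (Cᵀ * Aᵀ) := by rw [tB]
      _ = B * A * B * (Cᵀ * Aᵀ) := by rw [← Matrix.mul_assoc B]
      _ = B * (Cᵀ * Aᵀ) := by rw [hB2]
      _ = B * (A * C) := by rw [tC]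
      _ = B * A * C := by rw [Matrix.mul_assoc]
  have e2 : C = B * A * C := by
    calc C = C * A * C := hC2.symm
      _ = (C * A)ᵀ * C := by rw [hC4]
      _ = Aᵀ * Cᵀ * C := by rw [Matrix.transpose_mul]
      _ = B * A * Aᵀ * Cᵀ * C := by rw [hAt2]
      _ = B * A * (Aᵀ * Cᵀ) * C := by rw [Matrix.mul_assoc (B * A)]
      _ = B * A * (C * A) * C := by rw [tC']
      _ = B * A * (C * A * C) := by rw [Matrix.mul_assoc (B * A) (C * A) C]
      _ = B * A * C := by rw [hC2]
  rw [e1, ← e2]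

theorem exists_symm_mp (H : Matrix n n ℝ) (hH : Hᵀ = H) :
    ∃ G : Matrix n n ℝ, IsMP H G ∧ Gᵀ = G ∧ G * H = H * G := by
  have hHerm : H.IsHermitian := by
    show Hᴴ = H
    rw [Matrix.conjTranspose_eq_transpose_of_trivial]; exact hH
  set V : Matrix n n ℝ := (hHerm.eigenvectorUnitary : Matrix n n ℝ) with hV
  set W : Matrix n n ℝ := star V with hW
  have hWV : W * V = 1 := mem_unitaryGroup_iff'.mp hHerm.eigenvectorUnitary.2
  have hWt : Vᵀ = W := by
    rw [hW, Matrix.star_eq_conjTranspose, Matrix.conjTranspose_eq_transpose_of_trivial]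
  have hWt2 : Wᵀ = V := by rw [← hWt, Matrix.transpose_transpose]
  set e : n → ℝ := RCLike.ofReal ∘ hHerm.eigenvalues with he
  have hspec : H = V * Matrix.diagonal e * W := hHerm.spectral_theorem
  set g : n → ℝ := fun i => if e i = 0 then 0 else (e i)⁻¹ with hg
  have key : ∀ d1 d2 : n → ℝ,
      (V * diagonal d1 * W) * (V * diagonal d2 * W) = V * diagonal (fun i => d1 i * d2 i) * W := by
    intro d1 d2
    calc (V * diagonal d1 * W) * (V * diagonal d2 * W)
        = V * diagonal d1 * ((W * V) * (diagonal d2 * W)) := by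
          simp only [Matrix.mul_assoc]
      _ = V * diagonal d1 * (diagonal d2 * W) := by rw [hWV, Matrix.one_mul]
      _ = V * (diagonal d1 * diagonal d2) * W := by simp only [Matrix.mul_assoc]
      _ = V * diagonal (fun i => d1 i * d2 i) * W := by rw [Matrix.diagonal_mul_diagonal]
  have keyT : ∀ d : n → ℝ, (V * diagonal d * W)ᵀ = V * diagonal d * W := by
    intro d
    rw [Matrix.transpose_mul, Matrix.transpose_mul, Matrix.diagonal_transpose, hWt, hWt2,
      Matrix.mul_assoc]
  have hd : ∀ f1 f2 : n → ℝ, (∀ i, f1 i = f2 i) →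
      V * diagonal f1 * W = V * diagonal f2 * W := by
    intro f1 f2 h
    rw [show f1 = f2 from funext h]
  refine ⟨V * diagonal g * W, ⟨?_, ?_, ?_, ?_⟩, keyT g, ?_⟩
  · rw [hspec, key, key]
    refine hd _ _ fun i => ?_
    by_cases h : e i = 0
    · simp [hg, h]
    · simp only [hg, if_neg h]
      field_simp
  · rw [hspec, key, key]
    refine hd _ _ fun i => ?_
    by_cases h : e i = 0
    · simp [hg, h]
    · simp only [hg, if_neg h]
      field_simp
  · rw [hspec, key, keyT]
  · rw [hspec, key, keyT]
  · rw [hspec, key, key]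
    exact hd _ _ fun i => mul_comm _ _

theorem eq_zero_of_tmul_self (M : Matrix m n ℝ) (h : Mᵀ * M = 0) : M = 0 := by
  ext i j
  have hjj := congrFun (congrFun h j) j
  simp only [Matrix.mul_apply, Matrix.transpose_apply, Matrix.zero_apply] at hjj
  have := (Finset.sum_eq_zero_iff_of_nonneg (fun i _ => mul_self_nonneg (M i j))).mp hjj i
    (Finset.mem_univ i)
  have := mul_self_eq_zero.mp this
  simpa using this

theorem isMP_gram {A : Matrix m n ℝ} {G : Matrix n n ℝ}
    (hG : IsMP (Aᵀ * A) G) (hGs : Gᵀ = G) (hGc : G * (Aᵀ * A) = (Aᵀ * A) * G) :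
    IsMP A (G * Aᵀ) := by
  obtain ⟨h1, h2, h3, h4⟩ := hG
  set H : Matrix n n ℝ := Aᵀ * A with hH
  have hHs : Hᵀ = H := by rw [hH, Matrix.transpose_mul, Matrix.transpose_transpose]
  -- A * (G * H) = A
  have c1 : Aᵀ * (A * (G * H)) = H := by
    rw [← Matrix.mul_assoc, ← hH, ← Matrix.mul_assoc, h1]
  have ht : (A * (G * H))ᵀ = (H * G) * Aᵀ := by
    rw [Matrix.transpose_mul, Matrix.transpose_mul, hGs, hHs]
  have c2 : (A * (G * H))ᵀ * A = H := by
    rw [ht, Matrix.mul_assoc (H * G) Aᵀ A, ← hH, h1]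
  have c3 : (A * (G * H))ᵀ * (A * (G * H)) = H := by
    rw [ht, Matrix.mul_assoc (H * G) Aᵀ (A * (G * H)), c1, h1]
  have hM : (A - A * (G * H))ᵀ * (A - A * (G * H)) = 0 := by
    rw [Matrix.transpose_sub, Matrix.sub_mul, Matrix.mul_sub, Matrix.mul_sub, c1, c2, c3, ← hH]
    simp
  have hAGH : A * (G * H) = A := by
    have := eq_zero_of_tmul_self _ hM
    have := sub_eq_zero.mp this
    exact this.symm
  refine ⟨?_, ?_, ?_, ?_⟩
  · calc A * (G * Aᵀ) * A = A * (G * (Aᵀ * A)) := by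
          simp only [Matrix.mul_assoc]
      _ = A := hAGH
  · calc G * Aᵀ * A * (G * Aᵀ) = (G * (Aᵀ * A) * G) * Aᵀ := by simp only [Matrix.mul_assoc]
      _ = (G * H * G) * Aᵀ := by rw [← hH]
      _ = G * Aᵀ := by rw [h2]
  · rw [← Matrix.mul_assoc, Matrix.transpose_mul, Matrix.transpose_mul,
      Matrix.transpose_transpose, hGs, Matrix.mul_assoc]
  · calc (G * Aᵀ * A)ᵀ = (G * H)ᵀ := by rw [Matrix.mul_assoc, ← hH]
      _ = Hᵀ * Gᵀ := by rw [Matrix.transpose_mul]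
      _ = H * G := by rw [hHs, hGs]
      _ = G * H := by rw [← hGc]
      _ = G * Aᵀ * A := by rw [hH, ← Matrix.mul_assoc]

theorem exists_isMP (A : Matrix m n ℝ) : ∃ B : Matrix n m ℝ, IsMP A B := by
  obtain ⟨G, hG, hGs, hGc⟩ := exists_symm_mp (Aᵀ * A)
    (by rw [Matrix.transpose_mul, Matrix.transpose_transpose])
  exact ⟨G * Aᵀ, isMP_gram hG hGs hGc⟩

theorem pinv_isMP (A : Matrix m n ℝ) : IsMP A (pinv A) := by
  have h : ∃ B : Matrix n m ℝ,
      A * B * A = A ∧ B * A * B = B ∧ (A * B)ᵀ = A * B ∧ (B * A)ᵀ = B * A := exists_isMP A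
  rw [pinv, dif_pos h]
  exact h.choose_spec

theorem pinv_eq {A : Matrix m n ℝ} {B : Matrix n m ℝ} (hB : IsMP A B) : pinv A = B :=
  isMP_unique (pinv_isMP A) hB

theorem pinv_symm_spec {H : Matrix n n ℝ} (hH : Hᵀ = H) :
    IsMP H (pinv H) ∧ (pinv H)ᵀ = pinv H ∧ pinv H * H = H * pinv H := by
  obtain ⟨G, h1, h2, h3⟩ := exists_symm_mp H hH
  rw [pinv_eq h1]
  exact ⟨h1, h2, h3⟩

theorem pinv_gram (A : Matrix m n ℝ) : pinv A = pinv (Aᵀ * A) * Aᵀ := by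
  have hH : (Aᵀ * A)ᵀ = Aᵀ * A := by rw [Matrix.transpose_mul, Matrix.transpose_transpose]
  obtain ⟨h1, h2, h3⟩ := pinv_symm_spec hH
  exact pinv_eq (isMP_gram h1 h2 h3)

/-- collapse a `1×1` factor into a scalar -/
theorem unit_collapse (X : Matrix n Unit ℝ) (c : Matrix Unit Unit ℝ) :
    X * c = c () () • X := by
  ext i j
  simp [Matrix.mul_apply, Fintype.sum_unique, mul_comm]

theorem unit_entry_nonneg (Z : Matrix m Unit ℝ) : 0 ≤ (Zᵀ * Z) () () := by
  simp only [Matrix.mul_apply, Matrix.transpose_apply]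
  exact Finset.sum_nonneg fun i _ => mul_self_nonneg _

theorem unit_entry_pos {Q : Matrix Unit n ℝ} (hQ : Q ≠ 0) : 0 < (Q * Qᵀ) () () := by
  simp only [Matrix.mul_apply, Matrix.transpose_apply]
  rcases lt_or_eq_of_le (Finset.sum_nonneg fun j (_ : j ∈ Finset.univ) =>
    mul_self_nonneg (Q () j)) with h | h
  · exact h
  · exfalso
    apply hQ
    ext i j
    have := (Finset.sum_eq_zero_iff_of_nonneg fun j _ => mul_self_nonneg (Q () j)).mp h.symm j
      (Finset.mem_univ j)
    cases i
    simpa using mul_self_eq_zero.mp this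

theorem trace_unit (M : Matrix Unit Unit ℝ) : Matrix.trace M = M () () := by
  simp [Matrix.trace, Fintype.sum_unique]

theorem proj_unique {H P1 P2 : Matrix n n ℝ} (hHs : Hᵀ = H)
    (h1s : P1ᵀ = P1) (h2s : P2ᵀ = P2)
    (hHP1 : H * P1 = H) (hHP2 : H * P2 = H)
    (hX1 : ∃ X, P1 = H * X) (hX2 : ∃ X, P2 = H * X) : P1 = P2 := by
  obtain ⟨X1, hx1⟩ := hX1
  obtain ⟨X2, hx2⟩ := hX2
  have hP1H : P1 * H = H := by
    have := congrArg Matrix.transpose hHP1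
    rwa [Matrix.transpose_mul, h1s, hHs] at this
  have hP2H : P2 * H = H := by
    have := congrArg Matrix.transpose hHP2
    rwa [Matrix.transpose_mul, h2s, hHs] at this
  have e21 : P2 * P1 = P1 := by rw [hx1, ← Matrix.mul_assoc, hP2H]
  have e12 : P1 * P2 = P2 := by rw [hx2, ← Matrix.mul_assoc, hP1H]
  calc P1 = P2 * P1 := e21.symm
    _ = (P1ᵀ * P2ᵀ)ᵀ := by rw [← Matrix.transpose_mul, Matrix.transpose_transpose]
    _ = (P1 * P2)ᵀ := by rw [h1s, h2s]
    _ = P2ᵀ := by rw [e12]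
    _ = P2 := h2s

theorem key_case (A' : Matrix m n ℝ) (R : Matrix Unit n ℝ) :
    (Matrix.trace (pinv (A'ᵀ * A' + Rᵀ * R) * (A'ᵀ * A' + Rᵀ * R)) =
        Matrix.trace (pinv (A'ᵀ * A') * (A'ᵀ * A')) + 1) ∨
    (Matrix.trace (pinv (A'ᵀ * A' + Rᵀ * R) * (A'ᵀ * A' + Rᵀ * R)) =
        Matrix.trace (pinv (A'ᵀ * A') * (A'ᵀ * A')) ∧
      Matrix.trace (pinv (A'ᵀ * A' + Rᵀ * R)) ≤ Matrix.trace (pinv (A'ᵀ * A'))) := by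
  set H' : Matrix n n ℝ := A'ᵀ * A' with hH'def
  set H : Matrix n n ℝ := H' + Rᵀ * R with hHdef
  have hH's : H'ᵀ = H' := by
    rw [hH'def, Matrix.transpose_mul, Matrix.transpose_transpose]
  have hHs : Hᵀ = H := by
    rw [hHdef, Matrix.transpose_add, hH's, Matrix.transpose_mul, Matrix.transpose_transpose]
  obtain ⟨⟨g1, g2, g3, g4⟩, gs, gc⟩ := pinv_symm_spec hH's
  set G' : Matrix n n ℝ := pinv H' with hG'def
  set P' : Matrix n n ℝ := G' * H' with hP'def
  have hP's : P'ᵀ = P' := g4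
  have hP'idem : P' * P' = P' := by
    nth_rewrite 2 [hP'def]
    rw [← Matrix.mul_assoc, g2, ← hP'def]
  have hH'P' : H' * P' = H' := by rw [hP'def, ← Matrix.mul_assoc, g1]
  have hP'H' : P' * H' = H' := by rw [gc, g1]
  have hH'G' : H' * G' = P' := gc.symm
  have hDt : (G' * Rᵀ)ᵀ = R * G' := by
    rw [Matrix.transpose_mul, Matrix.transpose_transpose, gs]
  by_cases hQ : R * P' = R
  · -- a ∈ rowspace: rank preserved, Sherman–Morrison style downdate
    right
    set D : Matrix n Unit ℝ := G' * Rᵀ with hDdef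
    set t : ℝ := (R * D) () () with htdef
    have hGHG : G' * (H' * (G' * Rᵀ)) = G' * Rᵀ := by
      rw [← Matrix.mul_assoc, ← Matrix.mul_assoc, ← hP'def, g2]
    have hRD : R * D = (A' * D)ᵀ * (A' * D) := by
      calc R * D = R * (G' * (H' * (G' * Rᵀ))) := by rw [hGHG, ← hDdef]
        _ = (R * G') * (H' * (G' * Rᵀ)) := by rw [Matrix.mul_assoc R G' (H' * (G' * Rᵀ))]
        _ = Dᵀ * (H' * D) := by rw [← hDt, ← hDdef]
        _ = (A' * D)ᵀ * (A' * D) := by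
            rw [Matrix.transpose_mul A' D, hH'def, Matrix.mul_assoc A'ᵀ A' D,
              ← Matrix.mul_assoc Dᵀ A'ᵀ (A' * D)]
    have ht0 : 0 ≤ t := by rw [htdef, hRD]; exact unit_entry_nonneg _
    have h1t : (0:ℝ) < 1 + t := by linarith
    set μ : ℝ := (1 + t)⁻¹ with hμdef
    have hμ0 : 0 ≤ μ := le_of_lt (inv_pos.mpr h1t)
    have hμ1 : μ + μ * t = 1 := by
      have := inv_mul_cancel₀ h1t.ne'
      rw [← hμdef] at this
      linarith [this, mul_one_add μ t]
    have hzero : (1:ℝ) - μ - μ * t = 0 := by linarith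
    set G : Matrix n n ℝ := G' - μ • (D * Dᵀ) with hGdef
    have f0 : P' * Rᵀ = Rᵀ := by
      have := congrArg Matrix.transpose hQ
      rwa [Matrix.transpose_mul, hP's] at this
    have f1 : H' * D = Rᵀ := by
      rw [hDdef, ← Matrix.mul_assoc, ← gc, f0]
    have hp1 : H' * (D * Dᵀ) = Rᵀ * Dᵀ := by rw [← Matrix.mul_assoc, f1]
    have hp2 : Rᵀ * R * G' = Rᵀ * Dᵀ := by
      rw [Matrix.mul_assoc, ← hDt]
    have hp3 : Rᵀ * R * (D * Dᵀ) = t • (Rᵀ * Dᵀ) := by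
      calc Rᵀ * R * (D * Dᵀ) = (Rᵀ * (R * D)) * Dᵀ := by simp only [Matrix.mul_assoc]
        _ = (t • Rᵀ) * Dᵀ := by rw [unit_collapse Rᵀ (R * D), ← htdef]
        _ = t • (Rᵀ * Dᵀ) := by rw [Matrix.smul_mul]
    have hHG : H * G = P' := by
      calc H * G = (H' * G' + Rᵀ * R * G') -
            (μ • (H' * (D * Dᵀ)) + μ • (Rᵀ * R * (D * Dᵀ))) := by
            rw [hHdef, hGdef, Matrix.add_mul, Matrix.mul_sub, Matrix.mul_sub,
              Matrix.mul_smul, Matrix.mul_smul]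
            abel
        _ = (P' + Rᵀ * Dᵀ) - (μ • (Rᵀ * Dᵀ) + μ • (t • (Rᵀ * Dᵀ))) := by
            rw [hH'G', hp2, hp1, hp3]
        _ = P' + ((1 - μ - μ * t) • (Rᵀ * Dᵀ)) := by
            rw [smul_smul, sub_smul, sub_smul, one_smul]
            abel
        _ = P' := by rw [hzero, zero_smul, add_zero]
    have hGs2 : Gᵀ = G := by
      rw [hGdef, Matrix.transpose_sub, gs, Matrix.transpose_smul, Matrix.transpose_mul,
        Matrix.transpose_transpose]
    have hGH : G * H = P' := by
      have := congrArg Matrix.transpose hHG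
      rwa [Matrix.transpose_mul, hGs2, hHs, hP's] at this
    have hP'D : P' * D = D := by rw [hDdef, ← Matrix.mul_assoc, g2]
    have hmp : IsMP H G := by
      refine ⟨?_, ?_, ?_, ?_⟩
      · rw [hHG, hHdef, Matrix.mul_add, hP'H', ← Matrix.mul_assoc, f0]
      · rw [hGH, hGdef, Matrix.mul_sub, Matrix.mul_smul, g2, ← Matrix.mul_assoc, hP'D]
      · rw [hHG, hP's]
      · rw [hGH, hP's]
    have hpinv : pinv H = G := pinv_eq hmp
    constructor
    · rw [hpinv, hGH]
    · rw [hpinv, hGdef, Matrix.trace_sub, Matrix.trace_smul]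
      have h05 : 0 ≤ μ • Matrix.trace (D * Dᵀ) := by
        rw [smul_eq_mul]
        apply mul_nonneg hμ0
        rw [Matrix.trace_mul_comm, trace_unit]
        exact unit_entry_nonneg D
      linarith
  · -- a ∉ rowspace: rank increases by one
    left
    set Q : Matrix Unit n ℝ := R - R * P' with hQdef
    have hQne : Q ≠ 0 := by
      intro h
      rw [hQdef] at h
      exact hQ (sub_eq_zero.mp h).symm
    set c : ℝ := (Q * Qᵀ) () () with hcdef
    have hc0 : 0 < c := unit_entry_pos hQne
    have hQP' : Q * P' = 0 := by
      rw [hQdef, Matrix.sub_mul, Matrix.mul_assoc, hP'idem, sub_self]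
    have hP'Qt : P' * Qᵀ = 0 := by
      have := congrArg Matrix.transpose hQP'
      rwa [Matrix.transpose_mul, hP's, Matrix.transpose_zero] at this
    have hQH' : Q * H' = 0 := by
      rw [hQdef, Matrix.sub_mul, Matrix.mul_assoc, hP'H', sub_self]
    have hH'Qt : H' * Qᵀ = 0 := by
      have := congrArg Matrix.transpose hQH'
      rwa [Matrix.transpose_mul, hH's, Matrix.transpose_zero] at this
    have hRdecomp : Q + R * P' = R := by rw [hQdef, sub_add_cancel]
    have hRQt : R * Qᵀ = Q * Qᵀ := by
      have h2 : (R * P') * Qᵀ = 0 := by rw [Matrix.mul_assoc, hP'Qt, Matrix.mul_zero]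
      calc R * Qᵀ = (Q + R * P') * Qᵀ := by rw [hRdecomp]
        _ = Q * Qᵀ + (R * P') * Qᵀ := by rw [Matrix.add_mul]
        _ = Q * Qᵀ := by rw [h2, add_zero]
    obtain ⟨⟨k1, k2, k3, k4⟩, ks, kc⟩ := pinv_symm_spec hHs
    set P2 : Matrix n n ℝ := P' + c⁻¹ • (Qᵀ * Q) with hP2def
    have h2s : P2ᵀ = P2 := by
      rw [hP2def, Matrix.transpose_add, hP's, Matrix.transpose_smul, Matrix.transpose_mul,
        Matrix.transpose_transpose]
    have e1 : H * P' = H' + Rᵀ * (R * P') := by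
      rw [hHdef, Matrix.add_mul, hH'P', Matrix.mul_assoc]
    have e2 : H * (Qᵀ * Q) = c • (Rᵀ * Q) := by
      have e2a : H' * (Qᵀ * Q) = 0 := by rw [← Matrix.mul_assoc, hH'Qt, Matrix.zero_mul]
      have e2b : (Rᵀ * R) * (Qᵀ * Q) = c • (Rᵀ * Q) := by
        calc (Rᵀ * R) * (Qᵀ * Q) = (Rᵀ * (R * Qᵀ)) * Q := by simp only [Matrix.mul_assoc]
          _ = (Rᵀ * (Q * Qᵀ)) * Q := by rw [hRQt]
          _ = (c • Rᵀ) * Q := by rw [unit_collapse Rᵀ (Q * Qᵀ), ← hcdef]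
          _ = c • (Rᵀ * Q) := by rw [Matrix.smul_mul]
      rw [hHdef, Matrix.add_mul, e2a, e2b, zero_add]
    have e3 : Rᵀ * Q = Rᵀ * R - Rᵀ * (R * P') := by rw [hQdef, Matrix.mul_sub]
    have hHP2 : H * P2 = H := by
      calc H * P2 = H * P' + c⁻¹ • (H * (Qᵀ * Q)) := by
            rw [hP2def, Matrix.mul_add, Matrix.mul_smul]
        _ = (H' + Rᵀ * (R * P')) + c⁻¹ • (c • (Rᵀ * Q)) := by rw [e1, e2]
        _ = (H' + Rᵀ * (R * P')) + (Rᵀ * R - Rᵀ * (R * P')) := by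
            rw [smul_smul, inv_mul_cancel₀ hc0.ne', one_smul, e3]
        _ = H' + Rᵀ * R := by abel
        _ = H := hHdef.symm
    have x1 : H * G' = P' + Rᵀ * (R * G') := by
      rw [hHdef, Matrix.add_mul, hH'G', Matrix.mul_assoc]
    have x2 : H * Qᵀ = c • Rᵀ := by
      rw [hHdef, Matrix.add_mul, hH'Qt, zero_add, Matrix.mul_assoc, hRQt,
        unit_collapse Rᵀ (Q * Qᵀ), ← hcdef]
    set X0 : Matrix n n ℝ := G' - c⁻¹ • (Qᵀ * (R * G')) with hX0def
    have hP'X0 : H * X0 = P' := by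
      calc H * X0 = H * G' - c⁻¹ • ((H * Qᵀ) * (R * G')) := by
            rw [hX0def, Matrix.mul_sub, Matrix.mul_smul, Matrix.mul_assoc]
        _ = (P' + Rᵀ * (R * G')) - c⁻¹ • ((c • Rᵀ) * (R * G')) := by rw [x1, x2]
        _ = (P' + Rᵀ * (R * G')) - Rᵀ * (R * G') := by
            rw [Matrix.smul_mul, smul_smul, inv_mul_cancel₀ hc0.ne', one_smul]
        _ = P' := by abel
    set Z : Matrix n Unit ℝ := c⁻¹ • Qᵀ - X0 * Rᵀ with hZdef
    have hq : H * Z = Qᵀ := by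
      calc H * Z = c⁻¹ • (H * Qᵀ) - (H * X0) * Rᵀ := by
            rw [hZdef, Matrix.mul_sub, Matrix.mul_smul, Matrix.mul_assoc]
        _ = c⁻¹ • (c • Rᵀ) - P' * Rᵀ := by rw [x2, hP'X0]
        _ = Rᵀ - P' * Rᵀ := by rw [smul_smul, inv_mul_cancel₀ hc0.ne', one_smul]
        _ = Qᵀ := by
            rw [hQdef, Matrix.transpose_sub, Matrix.transpose_mul, hP's]
    have hX2ex : ∃ X, P2 = H * X := by
      refine ⟨X0 + c⁻¹ • (Z * Q), ?_⟩
      calc P2 = P' + c⁻¹ • (Qᵀ * Q) := hP2def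
        _ = H * X0 + c⁻¹ • ((H * Z) * Q) := by rw [hP'X0, hq]
        _ = H * (X0 + c⁻¹ • (Z * Q)) := by
            rw [Matrix.mul_add, Matrix.mul_smul, Matrix.mul_assoc]
    have hproj : pinv H * H = P2 := by
      apply proj_unique hHs k4 h2s ?_ hHP2 ⟨pinv H, kc⟩ hX2ex
      rw [← Matrix.mul_assoc, k1]
    rw [hproj, hP2def, Matrix.trace_add, Matrix.trace_smul, Matrix.trace_mul_comm Qᵀ Q,
      trace_unit, ← hcdef, smul_eq_mul, inv_mul_cancel₀ hc0.ne']


end Stmt0Aux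

/-- The sampling matrix `M_S` of a subset `S ⊆ {1,…,N}`: rows are indexed by the
elements of `S`, and the row corresponding to `j ∈ S` is the standard basis row vector `eⱼᵀ`. -/
def samp {N : ℕ} (S : Finset (Fin N)) : Matrix {x // x ∈ S} (Fin N) ℝ :=
  fun i j => if (i : Fin N) = j then 1 else 0

/-- Squared Frobenius norm of a matrix. -/
def frobSq {m n : Type*} [Fintype m] [Fintype n] (A : Matrix m n ℝ) : ℝ :=
  ∑ i, ∑ j, (A i j) ^ 2

/-- The least-squares reconstruction matrix `R_S = U (M_S U)†`. -/
def lsRec {N k : ℕ} (U : Matrix (Fin N) (Fin k) ℝ) (S : Finset (Fin N)) :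
    Matrix (Fin N) {x // x ∈ S} ℝ :=
  U * pinv (samp S * U)

/-- `ξ₁(S) = ‖U − R_S M_S U‖_F²`, the noiseless reconstruction error. -/
def xi1 {N k : ℕ} (U : Matrix (Fin N) (Fin k) ℝ) (S : Finset (Fin N)) : ℝ :=
  frobSq (U - lsRec U S * (samp S * U))

/-- `ξ₂(S) = ‖R_S‖_F²`, the noise-sensitivity term. -/
def xi2 {N k : ℕ} (U : Matrix (Fin N) (Fin k) ℝ) (S : Finset (Fin N)) : ℝ :=
  frobSq (lsRec U S)


namespace Stmt0Aux

variable {m n : Type*} [Fintype m] [Fintype n] [DecidableEq m] [DecidableEq n]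

theorem frobSq_eq_trace (M : Matrix m n ℝ) : frobSq M = Matrix.trace (Mᵀ * M) := by
  unfold frobSq
  simp only [Matrix.trace, Matrix.diag_apply, Matrix.mul_apply, Matrix.transpose_apply, sq]
  exact Finset.sum_comm

theorem xi2_eval {N k : ℕ} (U : Matrix (Fin N) (Fin k) ℝ) (hU : Uᵀ * U = 1)
    (S : Finset (Fin N)) :
    xi2 U S = Matrix.trace (pinv ((samp S * U)ᵀ * (samp S * U))) := by
  unfold xi2 lsRec
  rw [frobSq_eq_trace]
  set A : Matrix {x // x ∈ S} (Fin k) ℝ := samp S * U with hA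
  set H : Matrix (Fin k) (Fin k) ℝ := Aᵀ * A with hH
  have hHs : Hᵀ = H := by rw [hH, Matrix.transpose_mul, Matrix.transpose_transpose]
  obtain ⟨⟨g1, g2, g3, g4⟩, gs, gc⟩ := pinv_symm_spec hHs
  set G : Matrix (Fin k) (Fin k) ℝ := pinv H with hG
  have hBG : pinv A = G * Aᵀ := pinv_gram A
  have h1 : (U * pinv A)ᵀ * (U * pinv A) = (pinv A)ᵀ * pinv A := by
    rw [Matrix.transpose_mul, Matrix.mul_assoc (pinv A)ᵀ Uᵀ (U * pinv A),
      ← Matrix.mul_assoc Uᵀ U (pinv A), hU, Matrix.one_mul]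
  have h2 : pinv A * (pinv A)ᵀ = G := by
    rw [hBG, Matrix.transpose_mul G Aᵀ, Matrix.transpose_transpose A, gs,
      Matrix.mul_assoc G Aᵀ (A * G), ← Matrix.mul_assoc Aᵀ A G, ← hH,
      ← Matrix.mul_assoc G H G, g2]
  rw [h1, Matrix.trace_mul_comm, h2]

theorem xi1_eval {N k : ℕ} (U : Matrix (Fin N) (Fin k) ℝ) (hU : Uᵀ * U = 1)
    (S : Finset (Fin N)) :
    xi1 U S = (k : ℝ) -
      Matrix.trace (pinv ((samp S * U)ᵀ * (samp S * U)) * ((samp S * U)ᵀ * (samp S * U))) := by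
  unfold xi1 lsRec
  rw [frobSq_eq_trace]
  set A : Matrix {x // x ∈ S} (Fin k) ℝ := samp S * U with hA
  set H : Matrix (Fin k) (Fin k) ℝ := Aᵀ * A with hH
  obtain ⟨a1, a2, a3, a4⟩ := pinv_isMP A
  set P : Matrix (Fin k) (Fin k) ℝ := pinv A * A with hP
  have hPidem : P * P = P := by
    nth_rewrite 2 [hP]
    rw [← Matrix.mul_assoc, a2, ← hP]
  have e0 : U * pinv A * A = U * P := by rw [hP, Matrix.mul_assoc]
  have e1 : U - U * P = U * (1 - P) := by rw [Matrix.mul_sub, Matrix.mul_one]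
  have e2 : (U * (1 - P))ᵀ * (U * (1 - P)) = (1 - P)ᵀ * (1 - P) := by
    rw [Matrix.transpose_mul, Matrix.mul_assoc (1 - P)ᵀ Uᵀ (U * (1 - P)),
      ← Matrix.mul_assoc Uᵀ U (1 - P), hU, Matrix.one_mul]
  have e3 : (1 - P)ᵀ * (1 - P) = 1 - P := by
    rw [Matrix.transpose_sub, Matrix.transpose_one, a4]
    simp only [Matrix.sub_mul, Matrix.mul_sub, Matrix.one_mul, Matrix.mul_one]
    rw [hPidem, sub_self, sub_zero]
  have e4 : pinv A * A = pinv H * H := by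
    rw [pinv_gram A, Matrix.mul_assoc, ← hH]
  rw [e0, e1, e2, e3, Matrix.trace_sub, Matrix.trace_one, hP, e4]
  simp

theorem gram_decomp {N k : ℕ} (U : Matrix (Fin N) (Fin k) ℝ) (S : Finset (Fin N)) (v : Fin N)
    (hv : v ∈ S) :
    (samp S * U)ᵀ * (samp S * U) =
      (samp (S.erase v) * U)ᵀ * (samp (S.erase v) * U) +
        (Matrix.of fun (_ : Unit) j => U v j)ᵀ * (Matrix.of fun (_ : Unit) j => U v j) := by
  have hsamp : ∀ (T : Finset (Fin N)) (i : {x // x ∈ T}) (j : Fin k),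
      (samp T * U) i j = U i j := by
    intro T i j
    simp [samp, Matrix.mul_apply]
  ext j j'
  have expand : ∀ (T : Finset (Fin N)),
      ((samp T * U)ᵀ * (samp T * U)) j j' = ∑ i ∈ T, U i j * U i j' := by
    intro T
    rw [Matrix.mul_apply, ← Finset.sum_coe_sort T (fun i => U i j * U i j')]
    exact Finset.sum_congr rfl fun i _ => by rw [Matrix.transpose_apply, hsamp, hsamp]
  rw [Matrix.add_apply, expand, expand]
  have hrr : ((Matrix.of fun (_ : Unit) j => U v j)ᵀ *
      (Matrix.of fun (_ : Unit) j => U v j)) j j' = U v j * U v j' := by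
    simp [Matrix.mul_apply, Fintype.sum_unique]
  rw [hrr, ← Finset.sum_erase_add S _ hv]


end Stmt0Aux

/-- removing `v ∈ S` improves `S` (strictly decreases the expected MSE
`E[MSE_S] = ξ₁(S) + (k/(N·SNR))·ξ₂(S)`) if and only if `SNR < τ(S,v) = (k/N)·Δ₂(S,v)`. -/
theorem stmt0 (N k : ℕ) (hN : 0 < N) (hk : 0 < k) (hkN : k ≤ N)
    (U : Matrix (Fin N) (Fin k) ℝ) (hU : Uᵀ * U = 1)
    (S : Finset (Fin N)) (hS : S.Nonempty) (v : Fin N) (hv : v ∈ S)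
    (SNR : ℝ) (hSNR : 0 < SNR) :
    xi1 U S + ((k : ℝ) / (N * SNR)) * xi2 U S >
      xi1 U (S.erase v) + ((k : ℝ) / (N * SNR)) * xi2 U (S.erase v) ↔
    SNR < ((k : ℝ) / N) * (xi2 U S - xi2 U (S.erase v)) := by
  have hk' : (0:ℝ) < k := by exact_mod_cast hk
  have hN' : (0:ℝ) < N := by exact_mod_cast hN
  have hNS : (0:ℝ) < (N:ℝ) * SNR := mul_pos hN' hSNR
  have hc : (0:ℝ) < (k:ℝ) / ((N:ℝ) * SNR) := div_pos hk' hNS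
  have hkN' : (0:ℝ) < (k:ℝ) / (N:ℝ) := div_pos hk' hN'
  have hgram := Stmt0Aux.gram_decomp U S v hv
  have hkey := Stmt0Aux.key_case (samp (S.erase v) * U) (Matrix.of fun (_ : Unit) j => U v j)
  rw [← hgram] at hkey
  rw [Stmt0Aux.xi1_eval U hU S, Stmt0Aux.xi1_eval U hU (S.erase v),
    Stmt0Aux.xi2_eval U hU S, Stmt0Aux.xi2_eval U hU (S.erase v)]
  set tS : ℝ := Matrix.trace
    (pinv ((samp S * U)ᵀ * (samp S * U)) * ((samp S * U)ᵀ * (samp S * U))) with htS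
  set tE : ℝ := Matrix.trace
    (pinv ((samp (S.erase v) * U)ᵀ * (samp (S.erase v) * U)) *
      ((samp (S.erase v) * U)ᵀ * (samp (S.erase v) * U))) with htE
  set bS : ℝ := Matrix.trace (pinv ((samp S * U)ᵀ * (samp S * U))) with hbS
  set bE : ℝ := Matrix.trace (pinv ((samp (S.erase v) * U)ᵀ * (samp (S.erase v) * U))) with hbE
  have main : ∀ x : ℝ, ((k:ℝ) / ((N:ℝ) * SNR) * x > 1 ↔ SNR < (k:ℝ) / (N:ℝ) * x) := by
    intro x
    have hrw : (k:ℝ) / ((N:ℝ) * SNR) * x = ((k:ℝ) / (N:ℝ) * x) / SNR := by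
      field_simp
    rw [gt_iff_lt, hrw]
    exact one_lt_div hSNR
  rcases hkey with h | ⟨h1, h2⟩
  · rw [h]
    constructor
    · intro hgt
      refine (main (bS - bE)).mp ?_
      rw [gt_iff_lt, mul_sub]
      linarith
    · intro hlt
      have h3 := (main (bS - bE)).mpr hlt
      rw [gt_iff_lt, mul_sub] at h3
      linarith
  · rw [h1]
    constructor
    · intro hgt
      exfalso
      have hle : (k:ℝ) / ((N:ℝ) * SNR) * bS ≤ (k:ℝ) / ((N:ℝ) * SNR) * bE :=
        mul_le_mul_of_nonneg_left h2 hc.le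
      linarith
    · intro hlt
      exfalso
      have hle : (k:ℝ) / (N:ℝ) * (bS - bE) ≤ 0 :=
        mul_nonpos_of_nonneg_of_nonpos hkN'.le (by linarith)
      linarith
end
end

section
/- For any nonempty subset S ⊆ {1,…,N} and any vertex v ∈ S, if Δ₂(S,v) ≤ 0 then for every SNR > 0 removing v does not improve S, i.e., ξ₁(S) + (k/(N·SNR))·ξ₂(S) ≤ ξ₁(S∖{v}) + (k/(N·SNR))·ξ₂(S∖{v}). -/
open Matrix

noncomputable section

section Aux

lemma my_frobSq_trace {m n : Type*} [Fintype m] [Fintype n] (A : Matrix m n ℝ) :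
    (∑ i, ∑ j, (A i j)^2) = (Aᵀ * A).trace := by
  rw [Matrix.trace, Finset.sum_comm]
  simp [Matrix.diag, Matrix.mul_apply, sq]

lemma my_conjT {m n : Type*} (A : Matrix m n ℝ) : Aᴴ = Aᵀ := by
  ext i j; simp [Matrix.conjTranspose_apply]

lemma my_sq_zero {m n : Type*} [Fintype m] [Fintype n] (A : Matrix m n ℝ)
    (h : Aᵀ * A = 0) : A = 0 := by
  ext i j
  have hd : (Aᵀ * A) j j = 0 := by rw [h]; rfl
  rw [Matrix.mul_apply] at hd
  have hz : ∑ x, (A x j)^2 = 0 := by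
    rw [← hd]; exact Finset.sum_congr rfl fun x _ => by simp [Matrix.transpose_apply, sq]
  have := (Finset.sum_eq_zero_iff_of_nonneg (fun x _ => sq_nonneg (A x j))).mp hz i
    (Finset.mem_univ i)
  simpa [sq_eq_zero_iff] using this

lemma sym_pinv {n : Type*} [Fintype n] [DecidableEq n] (G : Matrix n n ℝ) (hG : Gᵀ = G) :
    ∃ C : Matrix n n ℝ, G * C * G = G ∧ C * G * C = C ∧ Cᵀ = C ∧ G * C = C * G := by
  have hH : G.IsHermitian := by rw [Matrix.IsHermitian, my_conjT, hG]
  set Q : Matrix n n ℝ := (hH.eigenvectorUnitary : Matrix n n ℝ) with hQ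
  set d : n → ℝ := RCLike.ofReal ∘ hH.eigenvalues with hd
  have hspec : G = Q * Matrix.diagonal d * star Q := hH.spectral_theorem
  have hQQ : Qᵀ * Q = 1 := by
    have := Matrix.mem_unitaryGroup_iff'.mp hH.eigenvectorUnitary.2
    rwa [star_eq_conjTranspose, my_conjT] at this
  have hstar : (star Q : Matrix n n ℝ) = Qᵀ := by rw [star_eq_conjTranspose, my_conjT]
  rw [hstar] at hspec
  set d' : n → ℝ := fun i => if d i = 0 then 0 else (d i)⁻¹ with hd'
  have key1 : Matrix.diagonal d * Matrix.diagonal d' * Matrix.diagonal d = Matrix.diagonal d := by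
    rw [Matrix.diagonal_mul_diagonal, Matrix.diagonal_mul_diagonal]
    refine congrArg Matrix.diagonal (funext fun i => ?_)
    by_cases h : d i = 0
    · simp [hd', h]
    · simp only [hd', if_neg h]; field_simp
  have key2 : Matrix.diagonal d' * Matrix.diagonal d * Matrix.diagonal d' =
      Matrix.diagonal d' := by
    rw [Matrix.diagonal_mul_diagonal, Matrix.diagonal_mul_diagonal]
    refine congrArg Matrix.diagonal (funext fun i => ?_)
    by_cases h : d i = 0
    · simp [hd', h]
    · simp only [hd', if_neg h]; field_simp
  have key3 : Matrix.diagonal d * Matrix.diagonal d' = Matrix.diagonal d' * Matrix.diagonal d := by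
    rw [Matrix.diagonal_mul_diagonal, Matrix.diagonal_mul_diagonal]
    refine congrArg Matrix.diagonal (funext fun i => mul_comm _ _)
  refine ⟨Q * Matrix.diagonal d' * Qᵀ, ?_, ?_, ?_, ?_⟩
  · rw [hspec]
    calc Q * Matrix.diagonal d * Qᵀ * (Q * Matrix.diagonal d' * Qᵀ) * (Q * Matrix.diagonal d * Qᵀ)
        = Q * (Matrix.diagonal d * (Qᵀ * Q) * Matrix.diagonal d' * (Qᵀ * Q) *
            Matrix.diagonal d) * Qᵀ := by simp only [Matrix.mul_assoc]
      _ = Q * Matrix.diagonal d * Qᵀ := by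
          rw [hQQ, Matrix.mul_one, Matrix.mul_one, key1, Matrix.mul_assoc]
  · rw [hspec]
    calc Q * Matrix.diagonal d' * Qᵀ * (Q * Matrix.diagonal d * Qᵀ) * (Q * Matrix.diagonal d' * Qᵀ)
        = Q * (Matrix.diagonal d' * (Qᵀ * Q) * Matrix.diagonal d * (Qᵀ * Q) *
            Matrix.diagonal d') * Qᵀ := by simp only [Matrix.mul_assoc]
      _ = Q * Matrix.diagonal d' * Qᵀ := by
          rw [hQQ, Matrix.mul_one, Matrix.mul_one, key2, Matrix.mul_assoc]
  · rw [Matrix.transpose_mul, Matrix.transpose_mul, Matrix.transpose_transpose,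
      Matrix.diagonal_transpose, Matrix.mul_assoc]
  · have cancel : ∀ M : Matrix n n ℝ, Qᵀ * (Q * M) = M := fun M => by
      rw [← Matrix.mul_assoc, hQQ, Matrix.one_mul]
    rw [hspec]
    calc Q * Matrix.diagonal d * Qᵀ * (Q * Matrix.diagonal d' * Qᵀ)
        = Q * (Matrix.diagonal d * Matrix.diagonal d') * Qᵀ := by
          simp only [Matrix.mul_assoc, cancel]
      _ = Q * (Matrix.diagonal d' * Matrix.diagonal d) * Qᵀ := by rw [key3]
      _ = Q * Matrix.diagonal d' * Qᵀ * (Q * Matrix.diagonal d * Qᵀ) := by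
          simp only [Matrix.mul_assoc, cancel]

lemma pinv_exists {m n : Type*} [Fintype m] [Fintype n] [DecidableEq m] [DecidableEq n]
    (A : Matrix m n ℝ) :
    ∃ B : Matrix n m ℝ,
      A * B * A = A ∧ B * A * B = B ∧ (A * B)ᵀ = A * B ∧ (B * A)ᵀ = B * A := by
  have hGsym : (Aᵀ * A)ᵀ = Aᵀ * A := by
    rw [Matrix.transpose_mul, Matrix.transpose_transpose]
  obtain ⟨C, hC1, hC2, hC3, hC4⟩ := sym_pinv (Aᵀ * A) hGsym
  have hACG : A * C * (Aᵀ * A) = A := by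
    have T : (A * C * (Aᵀ * A))ᵀ = (Aᵀ * A) * C * Aᵀ := by
      rw [Matrix.transpose_mul (A * C) (Aᵀ * A), Matrix.transpose_mul A C, hGsym, hC3,
        Matrix.mul_assoc (Aᵀ * A) C Aᵀ]
    have t1 : (Aᵀ * A) * C * Aᵀ * (A * C * (Aᵀ * A)) = Aᵀ * A := by
      calc (Aᵀ * A) * C * Aᵀ * (A * C * (Aᵀ * A))
          = ((Aᵀ * A) * C * (Aᵀ * A)) * (C * (Aᵀ * A)) := by simp only [Matrix.mul_assoc]
        _ = (Aᵀ * A) * (C * (Aᵀ * A)) := by rw [hC1]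
        _ = (Aᵀ * A) * C * (Aᵀ * A) := (Matrix.mul_assoc (Aᵀ * A) C (Aᵀ * A)).symm
        _ = Aᵀ * A := hC1
    have t2 : (Aᵀ * A) * C * Aᵀ * A = Aᵀ * A := by
      calc (Aᵀ * A) * C * Aᵀ * A = (Aᵀ * A) * C * (Aᵀ * A) := by simp only [Matrix.mul_assoc]
        _ = Aᵀ * A := hC1
    have t3 : Aᵀ * (A * C * (Aᵀ * A)) = Aᵀ * A := by
      calc Aᵀ * (A * C * (Aᵀ * A)) = (Aᵀ * A) * C * (Aᵀ * A) := by simp only [Matrix.mul_assoc]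
        _ = Aᵀ * A := hC1
    have hX : (A * C * (Aᵀ * A) - A)ᵀ * (A * C * (Aᵀ * A) - A) = 0 := by
      rw [Matrix.transpose_sub, T, Matrix.sub_mul, Matrix.mul_sub, Matrix.mul_sub, t1, t2, t3]
      abel
    exact sub_eq_zero.mp (my_sq_zero _ hX)
  refine ⟨C * Aᵀ, ?_, ?_, ?_, ?_⟩
  · calc A * (C * Aᵀ) * A = A * C * (Aᵀ * A) := by simp only [Matrix.mul_assoc]
      _ = A := hACG
  · calc C * Aᵀ * A * (C * Aᵀ) = (C * (Aᵀ * A) * C) * Aᵀ := by simp only [Matrix.mul_assoc]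
      _ = C * Aᵀ := by rw [hC2]
  · rw [Matrix.transpose_mul A (C * Aᵀ), Matrix.transpose_mul C Aᵀ,
      Matrix.transpose_transpose, hC3, Matrix.mul_assoc]
  · rw [Matrix.mul_assoc C Aᵀ A, Matrix.transpose_mul C (Aᵀ * A), hGsym, hC3]
    exact hC4

end Aux

lemma pinv_spec {m n : Type*} [Fintype m] [Fintype n] [DecidableEq m] [DecidableEq n]
    (A : Matrix m n ℝ) :
    A * pinv A * A = A ∧ pinv A * A * pinv A = pinv A ∧
      (A * pinv A)ᵀ = A * pinv A ∧ (pinv A * A)ᵀ = pinv A * A := by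
  classical
  have h := pinv_exists A
  rw [pinv, dif_pos h]
  exact h.choose_spec

lemma frobSq_eq_trace {m n : Type*} [Fintype m] [Fintype n] (A : Matrix m n ℝ) :
    frobSq A = (Aᵀ * A).trace := my_frobSq_trace A

lemma frobSq_nonneg {m n : Type*} [Fintype m] [Fintype n] (A : Matrix m n ℝ) :
    0 ≤ frobSq A :=
  Finset.sum_nonneg fun _ _ => Finset.sum_nonneg fun _ _ => sq_nonneg _

lemma xi1_eq_trace {N k : ℕ} (U : Matrix (Fin N) (Fin k) ℝ) (hU : Uᵀ * U = 1)
    (S : Finset (Fin N)) :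
    xi1 U S = ((1 : Matrix (Fin k) (Fin k) ℝ) -
      pinv (samp S * U) * (samp S * U)).trace := by
  set A := samp S * U with hA
  set B := pinv A with hB
  set P := B * A with hP
  obtain ⟨h1, h2, h3, h4⟩ := pinv_spec A
  have hPidem : P * P = P := by
    calc P * P = B * (A * B * A) := by rw [hP]; simp only [Matrix.mul_assoc]
      _ = B * A := by rw [h1]
  have hmain : U - lsRec U S * (samp S * U) = U * (1 - P) := by
    rw [Matrix.mul_sub, Matrix.mul_one, lsRec, ← hA, ← hB, Matrix.mul_assoc, ← hP]
  rw [xi1, hmain, frobSq_eq_trace]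
  have e1 : (U * (1 - P))ᵀ * (U * (1 - P)) = (1 - P)ᵀ * (Uᵀ * U) * (1 - P) := by
    rw [Matrix.transpose_mul]; simp only [Matrix.mul_assoc]
  rw [e1, hU, Matrix.mul_one]
  have e2 : (1 - P)ᵀ = 1 - P := by
    rw [Matrix.transpose_sub, Matrix.transpose_one, h4]
  rw [e2]
  have e3 : ((1 : Matrix (Fin k) (Fin k) ℝ) - P) * (1 - P) = 1 - P := by
    rw [Matrix.mul_sub, Matrix.sub_mul, Matrix.sub_mul, hPidem]
    simp only [Matrix.one_mul, Matrix.mul_one]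
    abel
  rw [e3]

/-- if `Δ₂(S,v) ≤ 0` then for every `SNR > 0` removing `v` does not
improve `S`. -/
theorem stmt1 (N k : ℕ) (hN : 0 < N) (hk : 0 < k) (hkN : k ≤ N)
    (U : Matrix (Fin N) (Fin k) ℝ) (hU : Uᵀ * U = 1)
    (S : Finset (Fin N)) (hS : S.Nonempty) (v : Fin N) (hv : v ∈ S)
    (hΔ₂ : xi2 U S - xi2 U (S.erase v) ≤ 0) :
    ∀ SNR : ℝ, 0 < SNR →
      xi1 U S + ((k : ℝ) / (N * SNR)) * xi2 U S ≤
        xi1 U (S.erase v) + ((k : ℝ) / (N * SNR)) * xi2 U (S.erase v) := by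
  intro SNR hSNR
  set S' := S.erase v with hS'
  set A := samp S * U with hA
  set A' := samp S' * U with hA'
  set B := pinv A with hB
  set B' := pinv A' with hB'
  set P := B * A with hP
  set P' := B' * A' with hP'
  obtain ⟨h1, h2, h3, h4⟩ := pinv_spec A
  obtain ⟨h1', h2', h3', h4'⟩ := pinv_spec A'
  -- samp S' factors through samp S
  set E : Matrix {x // x ∈ S'} {x // x ∈ S} ℝ :=
    fun i j => if (i : Fin N) = (j : Fin N) then 1 else 0 with hE
  have hsamp : samp S' = E * samp S := by
    ext i t
    have hiS : (i : Fin N) ∈ S := Finset.mem_of_mem_erase i.2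
    rw [Matrix.mul_apply]
    rw [Fintype.sum_eq_single (⟨(i : Fin N), hiS⟩ : {x // x ∈ S})]
    · simp [hE, samp]
    · intro b hb
      have : (i : Fin N) ≠ (b : Fin N) := by
        intro hcon
        exact hb (Subtype.ext hcon.symm)
      simp [hE, this]
  have hA'E : A' = E * A := by rw [hA', hsamp, Matrix.mul_assoc, ← hA]
  have hA'P : A' * P = A' := by
    calc A' * P = E * (A * B * A) := by
          rw [hA'E, hP]; simp only [Matrix.mul_assoc]
      _ = E * A := by rw [h1]
      _ = A' := hA'E.symm
  have hP'P : P' * P = P' := by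
    calc P' * P = B' * (A' * P) := by rw [hP']; simp only [Matrix.mul_assoc]
      _ = P' := by rw [hA'P, hP']
  have hPP' : P * P' = P' := by
    have := congrArg Matrix.transpose hP'P
    rwa [Matrix.transpose_mul, h4, h4'] at this
  have hPidem : P * P = P := by
    calc P * P = B * (A * B * A) := by rw [hP]; simp only [Matrix.mul_assoc]
      _ = B * A := by rw [h1]
  have hP'idem : P' * P' = P' := by
    calc P' * P' = B' * (A' * B' * A') := by rw [hP']; simp only [Matrix.mul_assoc]
      _ = B' * A' := by rw [h1']
  -- trace P' ≤ trace P
  have htr : P'.trace ≤ P.trace := by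
    have hdiff : (P - P')ᵀ * (P - P') = P - P' := by
      have e : (P - P')ᵀ = P - P' := by rw [Matrix.transpose_sub, h4, h4']
      rw [e, Matrix.sub_mul, Matrix.mul_sub, Matrix.mul_sub, hPidem, hPP', hP'P, hP'idem]
      abel
    have h0 : 0 ≤ (P - P').trace := by
      have := frobSq_nonneg (P - P')
      rwa [frobSq_eq_trace, hdiff] at this
    have : P.trace - P'.trace = (P - P').trace := (Matrix.trace_sub P P').symm
    linarith [this ▸ h0]
  -- xi1 comparison
  have hx1 : xi1 U S ≤ xi1 U S' := by
    rw [xi1_eq_trace U hU S, xi1_eq_trace U hU S', ← hA, ← hA', ← hB, ← hB', ← hP, ← hP',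
      Matrix.trace_sub, Matrix.trace_sub]
    linarith
  -- coefficient nonneg
  have hc : 0 ≤ (k : ℝ) / (N * SNR) := by
    apply div_nonneg (Nat.cast_nonneg k)
    positivity
  have hx2 : ((k : ℝ) / (N * SNR)) * (xi2 U S - xi2 U S') ≤ 0 :=
    mul_nonpos_of_nonneg_of_nonpos hc hΔ₂
  nlinarith [hx2, hx1]
end
end

section
/- Let v₁,…,v_N be an enumeration of the vertices {1,…,N} with no repeats, let S_i = {v₁,…,v_i}, and suppose the first k sampled vertices allow perfect noiseless reconstruction, i.e., rank(M_{S_k} U) = k. Then for every m ≤ k and every v ∈ S_m, τ(S_m, v) > 0; in particular for each such v there exists SNR > 0 such that removing v improves S_m. -/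
open Matrix

noncomputable section

/-- `S_m = {v₁,…,v_m}`: the set consisting of the first `m` vertices of the
enumeration `v` (0-indexed: the vertices `v j` for `j < m`). -/
def firstSamples {N : ℕ} (v : Fin N → Fin N) (m : ℕ) : Finset (Fin N) :=
  (Finset.univ.filter fun j : Fin N => (j : ℕ) < m).image v

lemma pinv_unique {m n : Type*} [Fintype m] [Fintype n] [DecidableEq m] [DecidableEq n]
    (A : Matrix m n ℝ) (B : Matrix n m ℝ)
    (h1 : A * B * A = A) (h2 : B * A * B = B)
    (h3 : (A * B)ᵀ = A * B) (h4 : (B * A)ᵀ = B * A) :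
    pinv A = B := by
  classical
  have hex : ∃ B : Matrix n m ℝ,
      A * B * A = A ∧ B * A * B = B ∧ (A * B)ᵀ = A * B ∧ (B * A)ᵀ = B * A :=
    ⟨B, h1, h2, h3, h4⟩
  rw [pinv, dif_pos hex]
  obtain ⟨g1, g2, g3, g4⟩ := hex.choose_spec
  set C := hex.choose with hC
  have hAB : A * C = A * B := by
    calc A * C = (A * B * A) * C := by rw [h1]
    _ = (A * B) * (A * C) := by simp only [Matrix.mul_assoc]
    _ = (A * B)ᵀ * (A * C)ᵀ := by rw [h3, g3]
    _ = (Bᵀ * Aᵀ) * (Cᵀ * Aᵀ) := by rw [transpose_mul, transpose_mul]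
    _ = Bᵀ * (A * C * A)ᵀ := by
      rw [transpose_mul (A * C) A, transpose_mul A C]; simp only [Matrix.mul_assoc]
    _ = Bᵀ * Aᵀ := by rw [g1]
    _ = (A * B)ᵀ := by rw [transpose_mul]
    _ = A * B := h3
  have hBA : C * A = B * A := by
    calc C * A = C * (A * B * A) := by rw [h1]
    _ = (C * A) * (B * A) := by simp only [Matrix.mul_assoc]
    _ = (C * A)ᵀ * (B * A)ᵀ := by rw [h4, g4]
    _ = (Aᵀ * Cᵀ) * (Aᵀ * Bᵀ) := by rw [transpose_mul, transpose_mul]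
    _ = (A * C * A)ᵀ * Bᵀ := by
      rw [transpose_mul (A * C) A, transpose_mul A C]; simp only [Matrix.mul_assoc]
    _ = Aᵀ * Bᵀ := by rw [g1]
    _ = (B * A)ᵀ := by rw [transpose_mul]
    _ = B * A := h4
  calc C = C * A * C := g2.symm
  _ = (B * A) * C := by rw [hBA]
  _ = B * (A * C) := by simp only [Matrix.mul_assoc]
  _ = B * (A * B) := by rw [hAB]
  _ = B * A * B := by simp only [Matrix.mul_assoc]
  _ = B := h2

lemma pinv_of_isUnit {m n : Type*} [Fintype m] [Fintype n] [DecidableEq m] [DecidableEq n]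
    (A : Matrix m n ℝ) (h : IsUnit (A * Aᵀ)) :
    pinv A = Aᵀ * (A * Aᵀ)⁻¹ := by
  have hdet : IsUnit (A * Aᵀ).det := (Matrix.isUnit_iff_isUnit_det _).mp h
  have hGG : (A * Aᵀ) * (A * Aᵀ)⁻¹ = 1 := Matrix.mul_nonsing_inv _ hdet
  have hGG' : (A * Aᵀ)⁻¹ * (A * Aᵀ) = 1 := Matrix.nonsing_inv_mul _ hdet
  have hGsym : (A * Aᵀ)ᵀ = A * Aᵀ := by rw [transpose_mul, transpose_transpose]
  have hGisym : ((A * Aᵀ)⁻¹)ᵀ = (A * Aᵀ)⁻¹ := by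
    rw [Matrix.transpose_nonsing_inv, hGsym]
  apply pinv_unique
  · have e1 : A * (Aᵀ * (A * Aᵀ)⁻¹) * A = ((A * Aᵀ) * (A * Aᵀ)⁻¹) * A := by
      simp only [Matrix.mul_assoc]
    rw [e1, hGG, Matrix.one_mul]
  · have e1 : Aᵀ * (A * Aᵀ)⁻¹ * A * (Aᵀ * (A * Aᵀ)⁻¹)
        = Aᵀ * ((A * Aᵀ)⁻¹ * ((A * Aᵀ) * (A * Aᵀ)⁻¹)) := by simp only [Matrix.mul_assoc]
    rw [e1, hGG, Matrix.mul_one]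
  · have h5 : A * (Aᵀ * (A * Aᵀ)⁻¹) = 1 := by rw [← Matrix.mul_assoc]; exact hGG
    rw [h5, transpose_one]
  · have e1 : (Aᵀ * (A * Aᵀ)⁻¹ * A)ᵀ = Aᵀ * (((A * Aᵀ)⁻¹)ᵀ * A) := by
      rw [transpose_mul (Aᵀ * (A * Aᵀ)⁻¹) A, transpose_mul Aᵀ ((A * Aᵀ)⁻¹),
        transpose_transpose]
    rw [e1, hGisym, Matrix.mul_assoc Aᵀ (A * Aᵀ)⁻¹ A]

lemma frobSq_mul_of_orth {N k : ℕ} {m : Type*} [Fintype m] (U : Matrix (Fin N) (Fin k) ℝ)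
    (hU : Uᵀ * U = 1) (M : Matrix (Fin k) m ℝ) : frobSq (U * M) = frobSq M := by
  rw [frobSq_eq_trace, frobSq_eq_trace, transpose_mul, Matrix.mul_assoc,
    ← Matrix.mul_assoc Uᵀ U M, hU, Matrix.one_mul]

lemma card_filter_lt (N m : ℕ) (h : m ≤ N) :
    (Finset.univ.filter fun j : Fin N => (j : ℕ) < m).card = m := by
  have e : (Finset.univ.filter fun j : Fin N => (j : ℕ) < m)
      = Finset.map (Fin.castLEEmb h) Finset.univ := by
    ext j
    simp only [Finset.mem_filter, Finset.mem_univ, true_and, Finset.mem_map,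
      Fin.castLEEmb, Function.Embedding.coeFn_mk]
    constructor
    · intro hj; exact ⟨⟨(j : ℕ), hj⟩, rfl⟩
    · rintro ⟨i, rfl⟩; exact i.isLt
  rw [e, Finset.card_map, Finset.card_univ, Fintype.card_fin]

lemma samp_mul_apply {N k : ℕ} (U : Matrix (Fin N) (Fin k) ℝ) (T : Finset (Fin N))
    (i : {x // x ∈ T}) (j : Fin k) : (samp T * U) i j = U (i : Fin N) j := by
  rw [Matrix.mul_apply]
  simp [samp]


/-- if the first `k` sampled vertices allow perfect noiseless reconstruction
(`rank(M_{S_k} U) = k`), then for every `m ≤ k` and every `v ∈ S_m`, `τ(S_m, v) > 0`;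
in particular there exists `SNR > 0` such that removing `v` improves `S_m`. -/
theorem stmt3 (N k : ℕ) (hN : 0 < N) (hk : 0 < k) (hkN : k ≤ N)
    (U : Matrix (Fin N) (Fin k) ℝ) (hU : Uᵀ * U = 1)
    (v : Fin N → Fin N) (hv : Function.Bijective v)
    (hrank : (samp (firstSamples v k) * U).rank = k) :
    ∀ m ≤ k, ∀ w ∈ firstSamples v m,
      0 < ((k : ℝ) / N) *
        (xi2 U (firstSamples v m) - xi2 U ((firstSamples v m).erase w)) ∧
      ∃ SNR : ℝ, 0 < SNR ∧
        xi1 U (firstSamples v m) + ((k : ℝ) / (N * SNR)) * xi2 U (firstSamples v m) >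
          xi1 U ((firstSamples v m).erase w) +
            ((k : ℝ) / (N * SNR)) * xi2 U ((firstSamples v m).erase w) := by
  classical
  intro m hm w hw
  set Sk := firstSamples v k with hSkdef
  set Sm := firstSamples v m with hSmdef
  set S' := Sm.erase w with hS'def
  have hsubm : Sm ⊆ Sk := by
    apply Finset.image_subset_image
    intro j hj
    simp only [Finset.mem_filter, Finset.mem_univ, true_and] at hj ⊢
    exact lt_of_lt_of_le hj hm
  have hsub' : S' ⊆ Sk := (Finset.erase_subset _ _).trans hsubm
  have hcard : Sk.card = k := by
    rw [hSkdef, firstSamples, Finset.card_image_of_injective _ hv.injective,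
      card_filter_lt N k hkN]
  -- injectivity of the transpose of the full sampled matrix
  have hinj : Function.Injective ((samp Sk * U)ᵀ.mulVecLin) := by
    have hrk : (samp Sk * U)ᵀ.rank = k := by rw [Matrix.rank_transpose]; exact hrank
    have hdom : Module.finrank ℝ ({x // x ∈ Sk} → ℝ) = k := by
      rw [Module.finrank_fintype_fun_eq_card, Fintype.card_coe, hcard]
    have hrn := LinearMap.finrank_range_add_finrank_ker ((samp Sk * U)ᵀ.mulVecLin)
    rw [hdom] at hrn
    have hrange : Module.finrank ℝ (LinearMap.range ((samp Sk * U)ᵀ.mulVecLin)) = k := hrk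
    have hker0 : Module.finrank ℝ (LinearMap.ker ((samp Sk * U)ᵀ.mulVecLin)) = 0 := by omega
    rw [← LinearMap.ker_eq_bot]
    exact Submodule.finrank_eq_zero.mp hker0
  -- kernel triviality for any subset of Sk
  have hker : ∀ (T : Finset (Fin N)), T ⊆ Sk → ∀ x : {a // a ∈ T} → ℝ,
      (samp T * U)ᵀ *ᵥ x = 0 → x = 0 := by
    intro T hT x hx
    set y : {a // a ∈ Sk} → ℝ :=
      fun i => if h : (i : Fin N) ∈ T then x ⟨i, h⟩ else 0 with hy
    have hAy : (samp Sk * U)ᵀ *ᵥ y = 0 := by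
      funext j
      have e0 : ((samp Sk * U)ᵀ *ᵥ y) j = ∑ i : {a // a ∈ Sk}, U (i : Fin N) j * y i := by
        rw [Matrix.mulVec, dotProduct]
        apply Finset.sum_congr rfl
        intro i _
        rw [Matrix.transpose_apply, samp_mul_apply]
      have e1 : ∑ i : {a // a ∈ Sk}, U (i : Fin N) j * y i
          = ∑ a ∈ Sk, (fun a : Fin N =>
              if h : a ∈ T then U a j * x ⟨a, h⟩ else 0) a := by
        rw [Finset.univ_eq_attach,
          ← Finset.sum_attach Sk (fun a : Fin N => if h : a ∈ T then U a j * x ⟨a, h⟩ else 0)]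
        apply Finset.sum_congr rfl
        intro i _
        by_cases h : (i : Fin N) ∈ T
        · rw [hy]; simp only [dif_pos h]
        · rw [hy]; simp only [dif_neg h, mul_zero]
      have e2 : ∑ a ∈ Sk, (fun a : Fin N =>
            if h : a ∈ T then U a j * x ⟨a, h⟩ else 0) a
          = ∑ a ∈ T, (fun a : Fin N =>
            if h : a ∈ T then U a j * x ⟨a, h⟩ else 0) a := by
        apply (Finset.sum_subset hT ?_).symm
        intro a _ ha
        simp only [dif_neg ha]
      have e3 : ∑ a ∈ T, (fun a : Fin N =>
            if h : a ∈ T then U a j * x ⟨a, h⟩ else 0) a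
          = ((samp T * U)ᵀ *ᵥ x) j := by
        rw [← Finset.sum_attach T (fun a : Fin N => if h : a ∈ T then U a j * x ⟨a, h⟩ else 0)]
        rw [Matrix.mulVec, dotProduct, Finset.univ_eq_attach]
        apply Finset.sum_congr rfl
        intro i _
        rw [Matrix.transpose_apply, samp_mul_apply]
        simp only [dif_pos i.2, Subtype.coe_eta]
      rw [e0, e1, e2, e3, hx]
    have hy0 : y = 0 := by
      apply hinj
      rw [Matrix.mulVecLin_apply, Matrix.mulVecLin_apply, hAy, Matrix.mulVec_zero]
    funext i
    have hyi := congrFun hy0 ⟨(i : Fin N), hT i.2⟩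
    · rw [hy] at hyi
      simp only [dif_pos i.2, Subtype.coe_eta, Pi.zero_apply] at hyi
      exact hyi
  -- invertibility of the Gram matrices
  have hunit : ∀ (T : Finset (Fin N)), T ⊆ Sk →
      IsUnit ((samp T * U) * (samp T * U)ᵀ) := by
    intro T hT
    apply Matrix.mulVec_injective_iff_isUnit.mp
    intro x y hxy
    have hz : ((samp T * U) * (samp T * U)ᵀ) *ᵥ (x - y) = 0 := by
      rw [Matrix.mulVec_sub, hxy, sub_self]
    have hdot : ((samp T * U)ᵀ *ᵥ (x - y)) ⬝ᵥ ((samp T * U)ᵀ *ᵥ (x - y)) = 0 := by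
      calc ((samp T * U)ᵀ *ᵥ (x - y)) ⬝ᵥ ((samp T * U)ᵀ *ᵥ (x - y))
          = ((x - y) ᵥ* (samp T * U)) ⬝ᵥ ((samp T * U)ᵀ *ᵥ (x - y)) := by
            rw [Matrix.mulVec_transpose]
      _ = (x - y) ⬝ᵥ ((samp T * U) *ᵥ ((samp T * U)ᵀ *ᵥ (x - y))) :=
            (Matrix.dotProduct_mulVec _ _ _).symm
      _ = (x - y) ⬝ᵥ (((samp T * U) * (samp T * U)ᵀ) *ᵥ (x - y)) := by
            rw [Matrix.mulVec_mulVec]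
      _ = 0 := by rw [hz, dotProduct_zero]
    have h0 : (samp T * U)ᵀ *ᵥ (x - y) = 0 := dotProduct_self_eq_zero.mp hdot
    exact sub_eq_zero.mp (hker T hT _ h0)
  have hpinvT : ∀ (T : Finset (Fin N)), T ⊆ Sk →
      pinv (samp T * U) = (samp T * U)ᵀ * ((samp T * U) * (samp T * U)ᵀ)⁻¹ :=
    fun T hT => pinv_of_isUnit _ (hunit T hT)
  have hxi2 : ∀ (T : Finset (Fin N)), xi2 U T = frobSq (pinv (samp T * U)) := by
    intro T; rw [xi2, lsRec]; exact frobSq_mul_of_orth U hU _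
  -- notation
  set A := samp Sm * U with hA
  set A' := samp S' * U with hA'
  set G := A * Aᵀ with hG
  set G' := A' * A'ᵀ with hG'
  set B := Aᵀ * G⁻¹ with hB
  set B' := A'ᵀ * G'⁻¹ with hB'
  have hGdet : IsUnit G.det := (Matrix.isUnit_iff_isUnit_det _).mp (hunit Sm hsubm)
  have hG'det : IsUnit G'.det := (Matrix.isUnit_iff_isUnit_det _).mp (hunit S' hsub')
  have hGG : G * G⁻¹ = 1 := Matrix.mul_nonsing_inv _ hGdet
  have hG'G' : G' * G'⁻¹ = 1 := Matrix.mul_nonsing_inv _ hG'det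
  have hABone : A * B = 1 := by rw [hB, ← Matrix.mul_assoc, ← hG]; exact hGG
  have hA'B'one : A' * B' = 1 := by rw [hB', ← Matrix.mul_assoc, ← hG']; exact hG'G'
  -- column-wise comparison
  have hcol : ∀ (a : Fin N) (ha : a ∈ S') (ha3 : a ∈ Sm),
      ∑ j, (B' j ⟨a, ha⟩) ^ 2 ≤ ∑ j, (B j ⟨a, ha3⟩) ^ 2 := by
    intro a ha ha3
    set c : Fin k → ℝ := fun j => B' j ⟨a, ha⟩ with hc
    set u : Fin k → ℝ := fun j => B j ⟨a, ha3⟩ with hu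
    set z : Fin k → ℝ := u - c with hzdef
    have hAu : A' *ᵥ u = fun i : {x // x ∈ S'} => if i = ⟨a, ha⟩ then (1:ℝ) else 0 := by
      funext i
      have hiS : (i : Fin N) ∈ Sm := Finset.mem_of_mem_erase i.2
      have e0 : (A' *ᵥ u) i = ∑ j, A' i j * B j ⟨a, ha3⟩ := by
        rw [Matrix.mulVec, dotProduct]
      have e1 : ∑ j, A' i j * B j ⟨a, ha3⟩
          = (A * B) (⟨(i : Fin N), hiS⟩ : {x // x ∈ Sm}) ⟨a, ha3⟩ := by
        rw [Matrix.mul_apply]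
        exact Finset.sum_congr rfl fun j _ => by
          rw [hA', hA, samp_mul_apply, samp_mul_apply]
      rw [e0, e1, hABone, Matrix.one_apply]
      by_cases h : (i : Fin N) = a
      · simp [Subtype.ext_iff, h]
      · simp [Subtype.ext_iff, h]
    have hAc : A' *ᵥ c = fun i : {x // x ∈ S'} => if i = ⟨a, ha⟩ then (1:ℝ) else 0 := by
      funext i
      have e0 : (A' *ᵥ c) i = (A' * B') i ⟨a, ha⟩ := by
        rw [Matrix.mulVec, dotProduct, Matrix.mul_apply]
      rw [e0, hA'B'one, Matrix.one_apply]
    have hAz : A' *ᵥ z = 0 := by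
      rw [hzdef, Matrix.mulVec_sub, hAu, hAc, sub_self]
    have hcz : c ⬝ᵥ z = 0 := by
      have hcform : c = A'ᵀ *ᵥ (fun l => G'⁻¹ l ⟨a, ha⟩) := by
        funext j
        simp only [hc, hB']
        rw [Matrix.mulVec, dotProduct, Matrix.mul_apply]
      rw [hcform, Matrix.mulVec_transpose, ← Matrix.dotProduct_mulVec, hAz,
        dotProduct_zero]
    have hsum : ∑ j, (u j)^2 = ∑ j, (c j)^2 + 2 * (c ⬝ᵥ z) + ∑ j, (z j)^2 := by
      have h1 : ∀ j, u j = c j + z j := by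
        intro j; simp only [hzdef, Pi.sub_apply]; ring
      calc ∑ j, (u j)^2 = ∑ j, ((c j)^2 + 2*(c j * z j) + (z j)^2) :=
          Finset.sum_congr rfl fun j _ => by rw [h1 j]; ring
      _ = ∑ j, (c j)^2 + 2 * (c ⬝ᵥ z) + ∑ j, (z j)^2 := by
          rw [Finset.sum_add_distrib, Finset.sum_add_distrib, dotProduct,
            ← Finset.mul_sum]
    have hznn : 0 ≤ ∑ j, (z j)^2 := Finset.sum_nonneg fun j _ => sq_nonneg _
    have hfin : ∑ j, (c j)^2 ≤ ∑ j, (u j)^2 := by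
      rw [hsum, hcz]; linarith
    simpa only [hc, hu] using hfin
  -- the w-column of B is nonzero
  have hg0 : (fun l => G⁻¹ l ⟨w, hw⟩) ≠ 0 := by
    intro h0
    have e : G *ᵥ (fun l => G⁻¹ l ⟨w, hw⟩) = fun i => (G * G⁻¹) i ⟨w, hw⟩ := by
      funext i; rw [Matrix.mulVec, dotProduct, Matrix.mul_apply]
    rw [h0, Matrix.mulVec_zero] at e
    have e2 := congrFun e ⟨w, hw⟩
    rw [hGG, Matrix.one_apply_eq] at e2
    simp at e2
  have hformw : (fun j => B j ⟨w, hw⟩) = (samp Sm * U)ᵀ *ᵥ (fun l => G⁻¹ l ⟨w, hw⟩) := by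
    funext j
    rw [← hA, hB, Matrix.mulVec, dotProduct, Matrix.mul_apply]
  have hcolw : (fun j => B j ⟨w, hw⟩) ≠ 0 := by
    intro h0
    apply hg0
    apply hker Sm hsubm
    rw [← hformw]
    exact h0
  have hpos : 0 < ∑ j, (B j ⟨w, hw⟩) ^ 2 := by
    have hex : ∃ j, B j ⟨w, hw⟩ ≠ 0 := by
      by_contra hall
      push_neg at hall
      exact hcolw (funext hall)
    obtain ⟨j0, hj0⟩ := hex
    exact Finset.sum_pos' (fun j _ => sq_nonneg _) ⟨j0, Finset.mem_univ j0, by positivity⟩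
  -- Frobenius norm decomposition over columns
  set F : Fin N → ℝ := fun a => if h : a ∈ Sm then ∑ j, (B j ⟨a, h⟩) ^ 2 else 0 with hF
  set F' : Fin N → ℝ := fun a => if h : a ∈ S' then ∑ j, (B' j ⟨a, h⟩) ^ 2 else 0 with hF'
  have hfB : frobSq B = ∑ a ∈ Sm, F a := by
    rw [frobSq, Finset.sum_comm, Finset.univ_eq_attach, ← Finset.sum_attach Sm F]
    refine Finset.sum_congr rfl fun i _ => ?_
    simp only [hF, dif_pos i.2, Subtype.coe_eta]
  have hfB' : frobSq B' = ∑ a ∈ S', F' a := by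
    rw [frobSq, Finset.sum_comm, Finset.univ_eq_attach, ← Finset.sum_attach S' F']
    refine Finset.sum_congr rfl fun i _ => ?_
    simp only [hF', dif_pos i.2, Subtype.coe_eta]
  have hle : ∑ a ∈ S', F' a ≤ ∑ a ∈ S', F a := by
    refine Finset.sum_le_sum fun a ha => ?_
    have ha3 : a ∈ Sm := Finset.mem_of_mem_erase ha
    simp only [hF, hF', dif_pos ha, dif_pos ha3]
    exact hcol a ha ha3
  have hsplit : ∑ a ∈ Sm, F a = F w + ∑ a ∈ S', F a := by
    rw [hS'def]
    exact (Finset.add_sum_erase Sm F hw).symm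
  have hFw : F w = ∑ j, (B j ⟨w, hw⟩) ^ 2 := by
    simp only [hF, dif_pos hw]
  have hfrlt : frobSq B' < frobSq B := by
    rw [hfB, hfB', hsplit, hFw]
    linarith [hle, hpos]
  -- translate to xi2
  have hxiS : xi2 U Sm = frobSq B := by
    rw [hxi2 Sm, hpinvT Sm hsubm, ← hA, ← hG, ← hB]
  have hxiS' : xi2 U S' = frobSq B' := by
    rw [hxi2 S', hpinvT S' hsub', ← hA', ← hG', ← hB']
  have hdpos : 0 < xi2 U Sm - xi2 U S' := by
    rw [hxiS, hxiS']; linarith [hfrlt]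
  have hNpos : (0:ℝ) < N := by exact_mod_cast hN
  have hkpos : (0:ℝ) < k := by exact_mod_cast hk
  constructor
  · exact mul_pos (div_pos hkpos hNpos) hdpos
  · set d := xi2 U Sm - xi2 U S' with hd
    set cc := xi1 U S' - xi1 U Sm with hcc
    set q := (|cc| + 1) / d with hq
    have hqpos : 0 < q := div_pos (by positivity) hdpos
    refine ⟨(k : ℝ) / (N * q), div_pos hkpos (mul_pos hNpos hqpos), ?_⟩
    have hNne : (N:ℝ) ≠ 0 := ne_of_gt hNpos
    have hkne : (k:ℝ) ≠ 0 := ne_of_gt hkpos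
    have hqne : q ≠ 0 := ne_of_gt hqpos
    have hqe : (k : ℝ) / ((N : ℝ) * ((k : ℝ) / ((N : ℝ) * q))) = q := by
      have hXpos : 0 < (N:ℝ) * ((k:ℝ) / ((N:ℝ) * q)) :=
        mul_pos hNpos (div_pos hkpos (mul_pos hNpos hqpos))
      rw [div_eq_iff (ne_of_gt hXpos)]
      field_simp
    rw [hqe]
    have hqd : q * d = |cc| + 1 := div_mul_cancel₀ _ (ne_of_gt hdpos)
    have habs := le_abs_self cc
    have hlin : q * xi2 U Sm - q * xi2 U S' = q * d := by rw [hd]; ring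
    linarith [hqd, habs, hlin, hcc]
end
end
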